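/- The sequence α_n = n ln(1 - 1/(2n)) - (1/2)ln n - ln W_n + (1/2)ln(e/π) + 1/(24n²) + 1/(48n³) + 1/(160n⁴) + 1/(960n⁵) is strictly increasing in n ≥ 1 and converges to 0; in particular α_n < 0 for all n ≥ 1. -/

import Mathlib

open Real Filter Topology

noncomputable def W (n : ℕ) : ℝ :=
  (∏ k ∈ Finset.range n, (2 * (k : ℝ) + 1)) / (∏ k ∈ Finset.range n, (2 * (k : ℝ) + 2))

noncomputable def α (n : ℕ) : ℝ :=
  (n : ℝ) * Real.log (1 - 1 / (2 * (n : ℝ))) - (1 / 2) * Real.log n - Real.log (W n)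
    + (1 / 2) * Real.log (Real.exp 1 / π) + 1 / (24 * (n : ℝ) ^ 2) + 1 / (48 * (n : ℝ) ^ 3)
    + 1 / (160 * (n : ℝ) ^ 4) + 1 / (960 * (n : ℝ) ^ 5)

lemma W_pos (n : ℕ) : 0 < W n := by
  apply div_pos <;> apply Finset.prod_pos <;> intro i _ <;> positivity

lemma W_succ (n : ℕ) : W (n+1) = W n * ((2*(n:ℝ)+1)/(2*(n:ℝ)+2)) := by
  unfold W
  rw [Finset.prod_range_succ, Finset.prod_range_succ, div_mul_div_comm]

lemma log_ratio_lower {w : ℝ} (h0 : 0 ≤ w) (h1 : w < 1) :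
    2*w + 2*w^3/3 ≤ Real.log ((1+w)/(1-w)) := by
  set f : ℝ → ℝ := fun y => Real.log (1+y) - Real.log (1-y) - (2*y + 2*y^3/3) with hf
  have H : ∀ y : ℝ, 0 ≤ y → y < 1 →
      HasDerivAt f (1/(1+y) + 1/(1-y) - (2 + 2*y^2)) y := by
    intro y hy0 hy1
    have h1p : (0:ℝ) < 1 + y := by linarith
    have h2p : (0:ℝ) < 1 - y := by linarith
    have d1 : HasDerivAt (fun z : ℝ => Real.log (1+z)) (1/(1+y)) y := by
      have := (Real.hasDerivAt_log h1p.ne').comp y ((hasDerivAt_id y).const_add (1:ℝ))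
      simpa [one_div, Function.comp_def] using this
    have d2 : HasDerivAt (fun z : ℝ => Real.log (1-z)) (-(1/(1-y))) y := by
      have hi : HasDerivAt (fun z : ℝ => 1 - z) (-1) y := (hasDerivAt_id y).const_sub 1
      have := (Real.hasDerivAt_log h2p.ne').comp y hi
      refine this.congr_deriv ?_
      field_simp
    have d3 : HasDerivAt (fun z : ℝ => 2*z + 2*z^3/3) (2 + 2*y^2) y := by
      have a1 : HasDerivAt (fun z : ℝ => z) 1 y := hasDerivAt_id y
      have := (a1.const_mul (2:ℝ)).add (((hasDerivAt_pow 3 y).const_mul (2:ℝ)).div_const 3)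
      refine this.congr_deriv ?_
      push_cast
      ring
    have := (d1.sub d2).sub d3
    refine this.congr_deriv ?_
    ring
  have hc : ContinuousOn f (Set.Icc 0 w) := by
    apply ContinuousOn.sub
    apply ContinuousOn.sub
    · exact ContinuousOn.log (by fun_prop) (fun y hy => by
        have := hy.1; have := hy.2; nlinarith [h1])
    · exact ContinuousOn.log (by fun_prop) (fun y hy => by
        have := hy.1; have := hy.2; nlinarith [h1])
    · fun_prop
  have hmono : MonotoneOn f (Set.Icc 0 w) := by
    apply monotoneOn_of_deriv_nonneg (convex_Icc 0 w) hc
    · rw [interior_Icc]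
      intro y hy
      exact ((H y hy.1.le (lt_of_lt_of_le hy.2 (le_of_lt h1))).differentiableAt).differentiableWithinAt
    · rw [interior_Icc]
      intro y hy
      have hy1 : y < 1 := lt_of_lt_of_le hy.2 (le_of_lt h1)
      rw [(H y hy.1.le hy1).deriv]
      have h1p : (0:ℝ) < 1 + y := by linarith [hy.1]
      have h2p : (0:ℝ) < 1 - y := by linarith
      have : 1/(1+y) + 1/(1-y) - (2 + 2*y^2) = 2*y^4/((1+y)*(1-y)) := by
        field_simp
        ring
      rw [this]
      apply div_nonneg (by positivity) (by positivity)
  have h0w : (0:ℝ) ∈ Set.Icc (0:ℝ) w := Set.left_mem_Icc.2 h0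
  have hww : w ∈ Set.Icc (0:ℝ) w := Set.right_mem_Icc.2 h0
  have := hmono h0w hww h0
  have hf0 : f 0 = 0 := by simp [hf]
  rw [hf0] at this
  have h1p : (0:ℝ) < 1 + w := by linarith
  have h2p : (0:ℝ) < 1 - w := by linarith
  rw [Real.log_div h1p.ne' h2p.ne']
  simp only [hf] at this
  linarith

lemma log_ratio_upper {w : ℝ} (h0 : 0 ≤ w) (h1 : w < 1) :
    Real.log ((1+w)/(1-w)) ≤ 2*w + 2*w^3/3 + 2*w^5/5 + 2*w^7/(7*(1-w^2)) := by
  set f : ℝ → ℝ := fun y =>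
    2*y + 2*y^3/3 + 2*y^5/5 + 2*y^7/(7*(1-y^2)) - (Real.log (1+y) - Real.log (1-y)) with hf
  have H : ∀ y : ℝ, 0 ≤ y → y < 1 →
      HasDerivAt f (2 + 2*y^2 + 2*y^4
        + (2*(7*y^6) * (7*(1-y^2)) - 2*y^7 * (7*(-(2*y)))) / (7*(1-y^2))^2
        - (1/(1+y) + 1/(1-y))) y := by
    intro y hy0 hy1
    have h1p : (0:ℝ) < 1 + y := by linarith
    have h2p : (0:ℝ) < 1 - y := by linarith
    have hden : (7:ℝ)*(1-y^2) ≠ 0 := by nlinarith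
    have d1 : HasDerivAt (fun z : ℝ => Real.log (1+z)) (1/(1+y)) y := by
      have := (Real.hasDerivAt_log h1p.ne').comp y ((hasDerivAt_id y).const_add (1:ℝ))
      simpa [one_div, Function.comp_def] using this
    have d2 : HasDerivAt (fun z : ℝ => Real.log (1-z)) (-(1/(1-y))) y := by
      have hi : HasDerivAt (fun z : ℝ => 1 - z) (-1) y := (hasDerivAt_id y).const_sub 1
      have := (Real.hasDerivAt_log h2p.ne').comp y hi
      refine this.congr_deriv ?_
      field_simp
    have dnum : HasDerivAt (fun z : ℝ => 2*z^7) (2*(7*y^6)) y := by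
      have := (hasDerivAt_pow 7 y).const_mul (2:ℝ)
      refine this.congr_deriv ?_
      push_cast; ring
    have dden : HasDerivAt (fun z : ℝ => 7*(1-z^2)) (7*(-(2*y))) y := by
      have := ((hasDerivAt_pow 2 y).const_sub 1).const_mul (7:ℝ)
      refine this.congr_deriv ?_
      push_cast; ring
    have dtail : HasDerivAt (fun z : ℝ => 2*z^7/(7*(1-z^2)))
        ((2*(7*y^6) * (7*(1-y^2)) - 2*y^7 * (7*(-(2*y)))) / (7*(1-y^2))^2) y :=
      dnum.div dden hden
    have dpoly : HasDerivAt (fun z : ℝ => 2*z + 2*z^3/3 + 2*z^5/5) (2 + 2*y^2 + 2*y^4) y := by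
      have := (((hasDerivAt_id y).const_mul (2:ℝ)).add
          (((hasDerivAt_pow 3 y).const_mul (2:ℝ)).div_const 3)).add
          (((hasDerivAt_pow 5 y).const_mul (2:ℝ)).div_const 5)
      refine this.congr_deriv ?_
      push_cast; ring
    have := (dpoly.add dtail).sub (d1.sub d2)
    refine this.congr_deriv ?_
    ring
  have hc : ContinuousOn f (Set.Icc 0 w) := by
    have hne : ∀ y ∈ Set.Icc (0:ℝ) w, (7:ℝ)*(1-y^2) ≠ 0 := by
      intro y hy
      have := hy.1; have := hy.2; nlinarith [h1]
    apply ContinuousOn.sub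
    · apply ContinuousOn.add (by fun_prop)
      exact ContinuousOn.div (by fun_prop) (by fun_prop) hne
    · apply ContinuousOn.sub
      · exact ContinuousOn.log (by fun_prop) (fun y hy => by
          have := hy.1; have := hy.2; nlinarith [h1])
      · exact ContinuousOn.log (by fun_prop) (fun y hy => by
          have := hy.1; have := hy.2; nlinarith [h1])
  have hmono : MonotoneOn f (Set.Icc 0 w) := by
    apply monotoneOn_of_deriv_nonneg (convex_Icc 0 w) hc
    · rw [interior_Icc]
      intro y hy
      exact ((H y hy.1.le (lt_of_lt_of_le hy.2 (le_of_lt h1))).differentiableAt).differentiableWithinAt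
    · rw [interior_Icc]
      intro y hy
      have hy1 : y < 1 := lt_of_lt_of_le hy.2 (le_of_lt h1)
      rw [(H y hy.1.le hy1).deriv]
      have h1p : (0:ℝ) < 1 + y := by linarith [hy.1]
      have h2p : (0:ℝ) < 1 - y := by linarith
      have hd : (0:ℝ) < 1 - y^2 := by nlinarith
      have : 2 + 2*y^2 + 2*y^4
        + (2*(7*y^6) * (7*(1-y^2)) - 2*y^7 * (7*(-(2*y)))) / (7*(1-y^2))^2
        - (1/(1+y) + 1/(1-y)) = 4*y^8/(7*((1+y)*(1-y)*(1-y^2))) := by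
        field_simp
        ring
      rw [this]
      apply div_nonneg (by positivity) (by positivity)
  have h0w : (0:ℝ) ∈ Set.Icc (0:ℝ) w := Set.left_mem_Icc.2 h0
  have hww : w ∈ Set.Icc (0:ℝ) w := Set.right_mem_Icc.2 h0
  have := hmono h0w hww h0
  have hf0 : f 0 = 0 := by simp [hf]
  rw [hf0] at this
  have h1p : (0:ℝ) < 1 + w := by linarith
  have h2p : (0:ℝ) < 1 - w := by linarith
  rw [Real.log_div h1p.ne' h2p.ne']
  simp only [hf] at this
  linarith

lemma key_ineq (x v s : ℝ) (hx : 1 ≤ x) (hv : v = 1/(4*x^2+2*x-1)) (hs : s = 1/(2*x+1)) :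
    (1/2) * (2*s + 2*s^3/3 + 2*s^5/5 + 2*s^7/(7*(1-s^2)))
      + (1/(24*x^2) + 1/(48*x^3) + 1/(160*x^4) + 1/(960*x^5))
      < x * (2*v + 2*v^3/3)
      + (1/(24*(x+1)^2) + 1/(48*(x+1)^3) + 1/(160*(x+1)^4) + 1/(960*(x+1)^5)) := by
  subst hv hs
  have hx0 : (0:ℝ) < x := by linarith
  have h1 : (0:ℝ) < x + 1 := by linarith
  have h2 : (0:ℝ) < 2*x + 1 := by linarith
  have h3 : (0:ℝ) < 4*x^2 + 2*x - 1 := by nlinarith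
  have h4 : (0:ℝ) < (2*x+1)^2 - 1 := by nlinarith
  have h5 : (1:ℝ) - (1/(2*x+1))^2 ≠ 0 := by
    have : (1:ℝ) - (1/(2*x+1))^2 = ((2*x+1)^2 - 1)/(2*x+1)^2 := by
      field_simp
    rw [this]
    positivity
  rw [← sub_pos]
  have hEq : x * (2*(1/(4*x^2+2*x-1)) + 2*(1/(4*x^2+2*x-1))^3/3)
      + (1/(24*(x+1)^2) + 1/(48*(x+1)^3) + 1/(160*(x+1)^4) + 1/(960*(x+1)^5))
      - ((1/2) * (2*(1/(2*x+1)) + 2*(1/(2*x+1))^3/3 + 2*(1/(2*x+1))^5/5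
          + 2*(1/(2*x+1))^7/(7*(1-(1/(2*x+1))^2)))
        + (1/(24*x^2) + 1/(48*x^3) + 1/(160*x^4) + 1/(960*x^5)))
      = (15742605 + 161808555*(x-1) + 764188900*(x-1)^2 + 2198935350*(x-1)^3
          + 4308609055*(x-1)^4 + 6083656920*(x-1)^5 + 6385774264*(x-1)^6
          + 5063675496*(x-1)^7 + 3049084160*(x-1)^8 + 1387817760*(x-1)^9
          + 470145920*(x-1)^10 + 114979200*(x-1)^11 + 19194624*(x-1)^12
          + 1958400*(x-1)^13 + 92160*(x-1)^14)
        / (6720*(4*x^2+2*x-1)^3*(2*x+1)^5*x^5*(x+1)^5) := by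
    rw [eq_div_iff (by positivity)]
    have h6 : x * (x * 4 + 2) - 1 ≠ 0 := by nlinarith
    have h7 : (x * 2 + 1) ^ 2 - 1 ≠ 0 := by nlinarith
    field_simp [h3.ne', h5]
    field_simp [h6, h7]
    ring
  rw [hEq]
  apply div_pos
  · have hy : (0:ℝ) ≤ x - 1 := by linarith
    have p2 : (0:ℝ) ≤ (x-1)^2 := by positivity
    have p3 : (0:ℝ) ≤ (x-1)^3 := by positivity
    have p4 : (0:ℝ) ≤ (x-1)^4 := by positivity
    have p5 : (0:ℝ) ≤ (x-1)^5 := by positivity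
    have p6 : (0:ℝ) ≤ (x-1)^6 := by positivity
    have p7 : (0:ℝ) ≤ (x-1)^7 := by positivity
    have p8 : (0:ℝ) ≤ (x-1)^8 := by positivity
    have p9 : (0:ℝ) ≤ (x-1)^9 := by positivity
    have p10 : (0:ℝ) ≤ (x-1)^10 := by positivity
    have p11 : (0:ℝ) ≤ (x-1)^11 := by positivity
    have p12 : (0:ℝ) ≤ (x-1)^12 := by positivity
    have p13 : (0:ℝ) ≤ (x-1)^13 := by positivity
    have p14 : (0:ℝ) ≤ (x-1)^14 := by positivity
    linarith
  · positivity

lemma wallis_rel (k : ℕ) : Real.Wallis.W k * ((W k)^2 * (2*(k:ℝ)+1)) = 1 := by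
  induction k with
  | zero => simp [Real.Wallis.W, W]
  | succ k ih =>
    have hk1 : (0:ℝ) < 2*(k:ℝ)+1 := by positivity
    have hk2 : (0:ℝ) < 2*(k:ℝ)+2 := by positivity
    have hk3 : (0:ℝ) < 2*(k:ℝ)+3 := by positivity
    rw [Real.Wallis.W_succ, W_succ]
    push_cast
    field_simp
    linear_combination (2*(k:ℝ)+3) * ih

lemma small_tendsto (c : ℝ) (hc : 0 < c) (p : ℕ) (hp : p ≠ 0) :
    Tendsto (fun n : ℕ => 1/(c*(n:ℝ)^p)) atTop (𝓝 0) := by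
  have hpow : Tendsto (fun n : ℕ => ((n:ℝ))^p) atTop atTop :=
    (tendsto_pow_atTop hp).comp tendsto_natCast_atTop_atTop
  have h := (hpow.const_mul_atTop hc).inv_tendsto_atTop
  exact h.congr fun n => by rw [Pi.inv_apply, ← one_div]

lemma alpha_tendsto : Tendsto α atTop (𝓝 0) := by
  have hA : Tendsto (fun n : ℕ => Real.log ((1 + (-(1/2))/(n:ℝ))^n)) atTop (𝓝 (-(1/2))) := by
    have := (Real.tendsto_one_add_div_pow_exp (-(1/2))).log (Real.exp_pos _).ne'
    simpa [Real.log_exp] using this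
  have h2 : Tendsto (fun n : ℕ => (2*(n:ℝ)+1)/(n:ℝ)) atTop (𝓝 2) := by
    have hx : Tendsto (fun n : ℕ => 2 + 1/(n:ℝ)) atTop (𝓝 2) := by
      simpa using (tendsto_const_nhds (x := (2:ℝ))).add tendsto_one_div_atTop_nhds_zero_nat
    apply hx.congr'
    filter_upwards [eventually_ge_atTop 1] with n hn
    have hn0 : (0:ℝ) < n := by exact_mod_cast hn
    field_simp
  have hB : Tendsto (fun n : ℕ => Real.Wallis.W n * (2*(n:ℝ)+1)/(n:ℝ)) atTop (𝓝 π) := by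
    have := Real.Wallis.tendsto_W_nhds_pi_div_two.mul h2
    have h4 : π/2 * 2 = π := by ring
    rw [h4] at this
    apply this.congr
    intro n
    rw [mul_div_assoc]
  have hBlog : Tendsto (fun n : ℕ => (1/2) * Real.log (Real.Wallis.W n * (2*(n:ℝ)+1)/(n:ℝ)))
      atTop (𝓝 ((1/2) * Real.log π)) :=
    (hB.log Real.pi_ne_zero).const_mul _
  have hC : Tendsto (fun _ : ℕ => (1/2) * Real.log (Real.exp 1 / π)) atTop
      (𝓝 ((1/2) * Real.log (Real.exp 1 / π))) := tendsto_const_nhds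
  have hs2 := small_tendsto 24 (by norm_num) 2 (by norm_num)
  have hs3 := small_tendsto 48 (by norm_num) 3 (by norm_num)
  have hs4 := small_tendsto 160 (by norm_num) 4 (by norm_num)
  have hs5 := small_tendsto 960 (by norm_num) 5 (by norm_num)
  have hsum := ((((((hA.add hBlog).add hC).add hs2).add hs3).add hs4).add hs5)
  have hlim : -(1/2) + (1/2) * Real.log π + (1/2) * Real.log (Real.exp 1 / π)
      + 0 + 0 + 0 + 0 = 0 := by
    rw [Real.log_div (Real.exp_ne_zero 1) Real.pi_ne_zero, Real.log_exp]
    ring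
  rw [hlim] at hsum
  apply hsum.congr'
  filter_upwards [eventually_ge_atTop 1] with n hn
  have hn0 : (0:ℝ) < n := by exact_mod_cast hn
  have hA' : Real.log ((1 + (-(1/2))/(n:ℝ))^n) = (n:ℝ) * Real.log (1 - 1/(2*(n:ℝ))) := by
    rw [Real.log_pow]
    congr 2
    rw [neg_div, div_div]
    ring
  have hfn : Real.Wallis.W n * (2*(n:ℝ)+1)/(n:ℝ) = 1/((W n)^2 * (n:ℝ)) := by
    rw [div_eq_div_iff hn0.ne' (mul_pos (pow_pos (W_pos n) 2) hn0).ne']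
    linear_combination (n:ℝ) * wallis_rel n
  have hB' : (1/2) * Real.log (Real.Wallis.W n * (2*(n:ℝ)+1)/(n:ℝ))
      = -((1/2) * Real.log (n:ℝ)) - Real.log (W n) := by
    have hinv : Real.log (1/((W n)^2*(n:ℝ))) = -Real.log ((W n)^2*(n:ℝ)) := by
      rw [one_div, Real.log_inv]
    rw [hfn, hinv, Real.log_mul (pow_ne_zero 2 (W_pos n).ne') hn0.ne', Real.log_pow]
    push_cast
    ring
  show _ = α n
  unfold α
  rw [hA', hB']
  ring

lemma alpha_succ {n : ℕ} (hn : 1 ≤ n) : α n < α (n+1) := by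
  set x : ℝ := (n : ℝ) with hxdef
  have hx : 1 ≤ x := by rw [hxdef]; exact_mod_cast hn
  have hx0 : (0:ℝ) < x := by linarith
  have h1 : (0:ℝ) < x + 1 := by linarith
  have h2 : (0:ℝ) < 2*x + 1 := by linarith
  have h2' : (0:ℝ) < 2*x + 2 := by linarith
  have h2'' : (0:ℝ) < 2*x - 1 := by linarith
  have h3 : (0:ℝ) < 4*x^2 + 2*x - 1 := by nlinarith
  set v : ℝ := 1/(4*x^2+2*x-1) with hvdef
  set s : ℝ := 1/(2*x+1) with hsdef
  have hv0 : 0 ≤ v := by positivity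
  have hv1 : v < 1 := by
    rw [hvdef, div_lt_one h3]; nlinarith
  have hs0 : 0 ≤ s := by positivity
  have hs1 : s < 1 := by
    rw [hsdef, div_lt_one h2]; nlinarith
  have logW : Real.log (W (n+1)) = Real.log (W n) + Real.log ((2*x+1)/(2*x+2)) := by
    rw [W_succ, Real.log_mul (W_pos n).ne' (by positivity)]
  have e1 : (1 : ℝ) - 1/(2*(x+1)) = (2*x+1)/(2*x+2) := by
    field_simp; ring
  have e2 : (1:ℝ) - 1/(2*x) = (2*x-1)/(2*x) := by
    field_simp
  have hd1 : Real.log ((1+v)/(1-v)) = Real.log ((2*x+1)/(2*x+2)) - Real.log ((2*x-1)/(2*x)) := by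
    rw [← Real.log_div (by positivity) (by positivity)]
    congr 1
    have h6 : (4*x^2+2*x-2 : ℝ) ≠ 0 := by nlinarith
    rw [hvdef]
    have ha : (1:ℝ) + 1/(4*x^2+2*x-1) = (4*x^2+2*x)/(4*x^2+2*x-1) := by
      rw [one_add_div h3.ne']; ring_nf
    have hb : (1:ℝ) - 1/(4*x^2+2*x-1) = (4*x^2+2*x-2)/(4*x^2+2*x-1) := by
      rw [one_sub_div h3.ne']; ring_nf
    rw [ha, hb, div_div_div_eq, div_div_div_eq,
      div_eq_div_iff (by positivity) (by positivity)]
    ring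
  have hd2 : Real.log ((1+s)/(1-s)) = Real.log (x+1) - Real.log x := by
    rw [← Real.log_div h1.ne' hx0.ne']
    congr 1
    rw [hsdef]
    field_simp
    ring
  have goal_eq : α (n+1) - α n = x * Real.log ((1+v)/(1-v))
      - (1/2) * Real.log ((1+s)/(1-s))
      + ((1/(24*(x+1)^2) + 1/(48*(x+1)^3) + 1/(160*(x+1)^4) + 1/(960*(x+1)^5))
        - (1/(24*x^2) + 1/(48*x^3) + 1/(160*x^4) + 1/(960*x^5))) := by
    unfold α
    push_cast
    rw [← hxdef, logW, e1, e2, hd1, hd2]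
    ring
  have hlow := log_ratio_lower hv0 hv1
  have hupp := log_ratio_upper hs0 hs1
  have hm1 : x*(2*v + 2*v^3/3) ≤ x * Real.log ((1+v)/(1-v)) :=
    mul_le_mul_of_nonneg_left hlow (by linarith)
  have hkey := key_ineq x v s hx hvdef hsdef
  have : 0 < α (n+1) - α n := by
    rw [goal_eq]
    linarith [hm1, hupp, hkey]
  linarith

theorem alpha_increasing_to_zero :
    StrictMonoOn α (Set.Ici 1) ∧ Tendsto α atTop (𝓝 0) ∧ ∀ n : ℕ, 1 ≤ n → α n < 0 := by
  have hmono : StrictMonoOn α (Set.Ici 1) := by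
    apply strictMonoOn_of_lt_succ Set.ordConnected_Ici
    intro a _ ha _
    have hsucc : Order.succ a = a + 1 := rfl
    rw [hsucc]
    exact alpha_succ (Set.mem_Ici.mp ha)
  refine ⟨hmono, alpha_tendsto, ?_⟩
  intro n hn
  have h1 : α (n+1) ≤ 0 := by
    apply ge_of_tendsto alpha_tendsto
    filter_upwards [eventually_ge_atTop (n+1)] with k hk
    rcases eq_or_lt_of_le hk with h | h
    · rw [← h]
    · exact (hmono (Set.mem_Ici.mpr (by omega)) (Set.mem_Ici.mpr (by omega)) h).le
  exact lt_of_lt_of_le (alpha_succ hn) h1
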